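/- Let F be a finite field with q elements where q ≡ 5 (mod 8). If (a,b) ∈ S_F^{back_2} and (p,r) is a nontrivial node with (p,r) ↦ (a,b), then exactly one of the two parents (p,r) and (r,p) of (a,b) lies in S_F^{back_2}. -/

import Mathlib

namespace AGM

variable {K : Type*} [Field K]

/-- A node `(a,b)` is nontrivial if `a`, `b`, `a+b`, `a-b` are all nonzero. -/
def Nontriv (p : K × K) : Prop :=
  p.1 ≠ 0 ∧ p.2 ≠ 0 ∧ p.1 + p.2 ≠ 0 ∧ p.1 - p.2 ≠ 0

/-- AGM advancement between nontrivial nodes: `2c = a + b` and `d² = ab`. -/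
def Adv (p q : K × K) : Prop :=
  Nontriv p ∧ Nontriv q ∧ 2 * q.1 = p.1 + p.2 ∧ q.2 ^ 2 = p.1 * p.2

/-- `AdvN n p`: there is a chain of `n` successive AGM advancements through
nontrivial nodes starting at `p`. -/
def AdvN : ℕ → K × K → Prop
  | 0, p => Nontriv p
  | n + 1, p => ∃ q, Adv p q ∧ AdvN n q

/-- `BackN n p`: there is a chain of `n` successive AGM advancements through
nontrivial nodes ending at `p`. -/
def BackN : ℕ → K × K → Prop
  | 0, p => Nontriv p
  | n + 1, p => ∃ q, Adv q p ∧ BackN n q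

/-- Indefinitely advanceable nodes. -/
def AdvInf (p : K × K) : Prop := ∀ n, AdvN n p

/-- Indefinitely backtrackable nodes. -/
def BackInf (p : K × K) : Prop := ∀ n, BackN n p

/-- Nontrivial k-values: `k ∉ {0, 1, -1}`. -/
def Tk (k : K) : Prop := k ≠ 0 ∧ k ≠ 1 ∧ k ≠ -1

/-- k-advancement: `(1+k₁)² k₂² = 4 k₁` for nontrivial k-values. -/
def kAdv (k₁ k₂ : K) : Prop := Tk k₁ ∧ Tk k₂ ∧ (1 + k₁) ^ 2 * k₂ ^ 2 = 4 * k₁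

/-- `TAdvN n k`: a chain of `n` k-advancements within `T_K` starting at `k`. -/
def TAdvN : ℕ → K → Prop
  | 0, k => Tk k
  | n + 1, k => ∃ k₂, kAdv k k₂ ∧ TAdvN n k₂

/-- `TBackN n k`: a chain of `n` k-advancements within `T_K` ending at `k`. -/
def TBackN : ℕ → K → Prop
  | 0, k => Tk k
  | n + 1, k => ∃ k₁, kAdv k₁ k ∧ TBackN n k₁

/-- Indefinitely advanceable k-values. -/
def TAdvInf (k : K) : Prop := ∀ n, TAdvN n k

/-- Indefinitely backtrackable k-values. -/
def TBackInf (k : K) : Prop := ∀ n, TBackN n k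

end AGM

/-!
In odd characteristic the parents of a nontrivial node `(p, r)` are the nodes `(p + s, p - s)`
with `s² = p² - r²`. Hence `(p, r)` is once backtrackable iff `p² - r²` is a square and, when
`-1 = i²` is a square, twice backtrackable iff `p s` is a square. Since `(a, b)` has a once
backtrackable parent and its parents are `(p, r)` and `(r, p)`, such an `s` exists, and `i s` serves
for `(r, p)`. The two test values multiply to `p s · r i s = i (b s)²`, and `i` is not a square
when `q ≡ 5 (mod 8)`, because `(1 + i)² = 2 i` and `2` is not a square.
-/

theorem isSquare_mul_iff_of_isSquare_left {K : Type*} [Field K] {a x : K} (ha : IsSquare a)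
    (ha0 : a ≠ 0) : IsSquare (a * x) ↔ IsSquare x := by
  refine ⟨fun h => ?_, ha.mul⟩
  simpa [ha0] using h.div ha

theorem FiniteField.not_isSquare_of_mul_self_eq_neg_one {F : Type*} [Field F] [Fintype F]
    (hF : Fintype.card F % 8 = 5) {i : F} (hi : i * i = -1) : ¬IsSquare i := by
  rintro ⟨j, rfl⟩
  have hj : j ≠ 0 := by rintro rfl; simp at hi
  refine (FiniteField.isSquare_two_iff.mp ⟨(1 + j * j) / j, ?_⟩).2 hF
  field_simp
  linear_combination -hi

theorem FiniteField.xor_isSquare_of_not_isSquare_mul {F : Type*} [Field F] [Fintype F]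
    {x y : F} (h : ¬IsSquare (x * y)) : Xor' (IsSquare x) (IsSquare y) := by
  classical
  have hx : x ≠ 0 := by rintro rfl; simp at h
  have hy : y ≠ 0 := by rintro rfl; simp at h
  rw [← quadraticChar_neg_one_iff_not_isSquare, map_mul] at h
  rw [← quadraticChar_one_iff_isSquare hx, ← quadraticChar_one_iff_isSquare hy]
  rcases quadraticChar_dichotomy hx with hx1 | hx1 <;>
    rcases quadraticChar_dichotomy hy with hy1 | hy1 <;> simp [hx1, hy1, Xor'] at h ⊢

namespace AGM

variable {K : Type*} [Field K]

theorem Nontriv.swap {p r : K} (h : Nontriv (p, r)) : Nontriv (r, p) := by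
  obtain ⟨hp, hr, hadd, hsub⟩ := h
  exact ⟨hr, hp, by rwa [add_comm], fun h => hsub (by linear_combination -h)⟩

theorem Adv.eq_or_eq_swap {u v p r : K} {c : K × K} (huv : Adv (u, v) c) (hpr : Adv (p, r) c) :
    (u, v) = (p, r) ∨ (u, v) = (r, p) := by
  have hsum : u + v = p + r := huv.2.2.1.symm.trans hpr.2.2.1
  have hprod : u * v = p * r := huv.2.2.2.symm.trans hpr.2.2.2
  have hroots : (u - p) * (u - r) = 0 := by linear_combination u * hsum - hprod
  simp only [Prod.mk.injEq]
  rcases mul_eq_zero.mp hroots with h | h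
  · exact Or.inl ⟨by linear_combination h, by linear_combination hsum - h⟩
  · exact Or.inr ⟨by linear_combination h, by linear_combination hsum - h⟩

theorem adv_iff (h2 : (2 : K) ≠ 0) {u v p r : K} :
    Adv (u, v) (p, r) ↔
      Nontriv (p, r) ∧ ∃ s, s ^ 2 = p ^ 2 - r ^ 2 ∧ u = p + s ∧ v = p - s := by
  constructor
  · rintro ⟨-, hpr, hsum, hprod⟩
    dsimp only at hsum hprod
    refine ⟨hpr, (u - v) / 2, ?_, ?_, ?_⟩ <;> field_simp
    · linear_combination (-(2 * p + u + v)) * hsum + 4 * hprod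
    · linear_combination -hsum
    · linear_combination -hsum
  · rintro ⟨hpr, s, hs, rfl, rfl⟩
    obtain ⟨hp, hr, hadd, hsub⟩ := hpr
    have hprod : (p + s) * (p - s) = r ^ 2 := by linear_combination -hs
    have hs0 : s ≠ 0 := by
      rintro rfl
      exact mul_ne_zero hadd hsub (by linear_combination -hs)
    have hprod0 : (p + s) * (p - s) ≠ 0 := hprod ▸ pow_ne_zero 2 hr
    refine ⟨⟨left_ne_zero_of_mul hprod0, right_ne_zero_of_mul hprod0, ?_, ?_⟩,
      ⟨hp, hr, hadd, hsub⟩, by ring, by linear_combination hs⟩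
    · convert mul_ne_zero h2 hp using 1; ring
    · convert mul_ne_zero h2 hs0 using 1; ring

theorem backN_succ_iff (h2 : (2 : K) ≠ 0) (n : ℕ) {p r : K} :
    BackN (n + 1) (p, r) ↔
      Nontriv (p, r) ∧ ∃ s, s ^ 2 = p ^ 2 - r ^ 2 ∧ BackN n (p + s, p - s) := by
  simp only [BackN]
  constructor
  · rintro ⟨⟨u, v⟩, hadv, hback⟩
    obtain ⟨hpr, s, hs, rfl, rfl⟩ := (adv_iff h2).mp hadv
    exact ⟨hpr, s, hs, hback⟩
  · rintro ⟨hpr, s, hs, hback⟩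
    exact ⟨_, (adv_iff h2).mpr ⟨hpr, s, hs, rfl, rfl⟩, hback⟩

theorem backN_one_iff (h2 : (2 : K) ≠ 0) {p r : K} (h : Nontriv (p, r)) :
    BackN 1 (p, r) ↔ IsSquare (p ^ 2 - r ^ 2) := by
  rw [backN_succ_iff h2]
  constructor
  · rintro ⟨-, s, hs, -⟩
    exact ⟨s, by rw [← hs, sq]⟩
  · rintro ⟨s, hs⟩
    have hs' : s ^ 2 = p ^ 2 - r ^ 2 := by rw [hs, sq]
    exact ⟨h, s, hs', ((adv_iff h2).mpr ⟨h, s, hs', rfl, rfl⟩).1⟩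

theorem backN_one_swap (h2 : (2 : K) ≠ 0) (hi : IsSquare (-1 : K)) {p r : K}
    (h : BackN 1 (p, r)) : BackN 1 (r, p) := by
  have hpr : Nontriv (p, r) := ((backN_succ_iff h2 0).mp h).1
  rw [backN_one_iff h2 hpr.swap,
    ← isSquare_mul_iff_of_isSquare_left hi (neg_ne_zero.mpr one_ne_zero)]
  convert (backN_one_iff h2 hpr).mp h using 1
  ring

theorem backN_one_of_adv_of_backN_two (h2 : (2 : K) ≠ 0) (hi : IsSquare (-1 : K)) {p r : K}
    {c : K × K} (hc : BackN 2 c) (h : Adv (p, r) c) : BackN 1 (p, r) := by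
  obtain ⟨⟨u, v⟩, huv, hback⟩ := hc
  rcases huv.eq_or_eq_swap h with heq | heq <;> rw [heq] at hback
  · exact hback
  · exact backN_one_swap h2 hi hback

theorem backN_two_iff (h2 : (2 : K) ≠ 0) (hi : IsSquare (-1 : K)) {p r s : K}
    (h : Nontriv (p, r)) (hs : s ^ 2 = p ^ 2 - r ^ 2) : BackN 2 (p, r) ↔ IsSquare (p * s) := by
  have h4 : IsSquare (4 : K) := ⟨2, by norm_num⟩
  have h40 : (4 : K) ≠ 0 := by convert mul_ne_zero h2 h2 using 1; norm_num
  have hparent :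
      ∀ t : K, t ^ 2 = p ^ 2 - r ^ 2 → (BackN 1 (p + t, p - t) ↔ IsSquare (p * t)) := by
    intro t ht
    rw [backN_one_iff h2 ((adv_iff h2).mpr ⟨h, t, ht, rfl, rfl⟩).1,
      show (p + t) ^ 2 - (p - t) ^ 2 = 4 * (p * t) by ring,
      isSquare_mul_iff_of_isSquare_left h4 h40]
  rw [backN_succ_iff h2]
  constructor
  · rintro ⟨-, t, ht, hback⟩
    rcases sq_eq_sq_iff_eq_or_eq_neg.mp (ht.trans hs.symm) with rfl | rfl
    · exact (hparent _ ht).mp hback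
    · rw [← isSquare_mul_iff_of_isSquare_left hi (neg_ne_zero.mpr one_ne_zero)]
      convert (hparent _ ht).mp hback using 1
      ring
  · exact fun hsq => ⟨h, s, hs, (hparent s hs).mpr hsq⟩

end AGM

theorem stmt13 {F : Type*} [Field F] [Fintype F] (q : ℕ)
    (hq : Fintype.card F = q) (h5 : q % 8 = 5)
    (a b p r : F) (hab : AGM.BackN 2 (a, b)) (hpar : AGM.Adv (p, r) (a, b)) :
    Xor' (AGM.BackN 2 (p, r)) (AGM.BackN 2 (r, p)) := by
  have h2 : (2 : F) ≠ 0 := Ring.two_ne_zero fun hchar => by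
    have := FiniteField.even_card_iff_char_two.mp hchar
    omega
  obtain ⟨i, hi⟩ : IsSquare (-1 : F) := FiniteField.isSquare_neg_one_iff.mpr (by omega)
  have hback := AGM.backN_one_of_adv_of_backN_two h2 ⟨i, hi⟩ hab hpar
  obtain ⟨hpr, ⟨-, hb, -, -⟩, -, hprod⟩ := hpar
  obtain ⟨s, hs⟩ := (AGM.backN_one_iff h2 hpr).mp hback
  have hs0 : s ≠ 0 := by
    rintro rfl
    exact mul_ne_zero hpr.2.2.1 hpr.2.2.2 (by linear_combination hs)
  rw [AGM.backN_two_iff h2 ⟨i, hi⟩ hpr (s := s) (by linear_combination -hs),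
    AGM.backN_two_iff h2 ⟨i, hi⟩ hpr.swap (s := i * s)
      (by linear_combination (-s ^ 2) * hi + hs)]
  refine FiniteField.xor_isSquare_of_not_isSquare_mul ?_
  rw [show p * s * (r * (i * s)) = (b * s) ^ 2 * i by linear_combination (-(i * s ^ 2)) * hprod,
    isSquare_mul_iff_of_isSquare_left (IsSquare.sq _) (pow_ne_zero 2 (mul_ne_zero hb hs0))]
  exact FiniteField.not_isSquare_of_mul_self_eq_neg_one (hq ▸ h5) hi.symm
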